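/- Let L1, L2 : F_{2^n} → F_{2^n} be nonzero, non-bijective F_2-linear maps with ker(L1*) ∩ ker(L2*) = {0}, and suppose x ↦ L1(x^{-1}) + L2(x) is a permutation of F_{2^n}. Then for any nonzero c ∈ ker(L2*), the set V = L1*(c) · L2*(ker(L1*)) is an F_2-subspace of F_{2^n} of dimension equal to dim ker(L1*), and K_n(v) = 0 for every v ∈ V. -/
import Mathlib


noncomputable section

abbrev K (n : ℕ) := GaloisField 2 n

noncomputable instance (n : ℕ) : Fintype (K n) := Fintype.ofFinite _

/-- The absolute trace of `F_{2^n}` to `F_2`. -/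
def tr (n : ℕ) : K n →ₗ[ZMod 2] ZMod 2 := Algebra.trace (ZMod 2) (K n)

/-- The additive character `x ↦ (-1)^{Tr(x)}`. -/
def chi (n : ℕ) (x : K n) : ℤ := (-1) ^ (tr n x).val

/-- The Kloosterman sum. -/
def Kl (n : ℕ) (a : K n) : ℤ := ∑ x : K n, chi n (x⁻¹ + a * x)

/-- The quadratic form `Q(x) = ∑_{0 ≤ i < j < n} x^{2^i + 2^j}`. -/
def Qf (n : ℕ) (x : K n) : K n := ∑ i ∈ Finset.range n, ∑ j ∈ Finset.Ioo i n, x ^ (2^i + 2^j)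

lemma tr_add (n : ℕ) (x y : K n) : tr n (x + y) = tr n x + tr n y := map_add _ _ _

lemma chi_tr (n : ℕ) (x y : K n) (h : tr n x = tr n y) : chi n x = chi n y := by
  unfold chi; rw [h]

lemma chi_add (n : ℕ) (x y : K n) : chi n (x + y) = chi n x * chi n y := by
  unfold chi
  rw [map_add]
  rcases (by decide : ∀ a b : ZMod 2, (-1:ℤ) ^ ((a+b).val) = (-1)^a.val * (-1)^b.val)
    (tr n x) (tr n y) with h
  exact h

lemma sum_chi (n : ℕ) : ∑ x : K n, chi n x = 0 := by
  obtain ⟨z, hz⟩ := Algebra.trace_surjective (ZMod 2) (K n) 1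
  have h1 : ∑ x : K n, chi n x = ∑ x : K n, chi n (x + z) :=
    (Fintype.sum_equiv (Equiv.addRight z) _ _ (fun x => rfl)).symm
  have h2 : ∀ x : K n, chi n (x + z) = -chi n x := by
    intro x
    rw [chi_add]
    have : chi n z = -1 := by unfold chi tr; rw [hz]; decide
    rw [this]; ring
  simp only [h2, Finset.sum_neg_distrib] at h1
  omega

lemma sum_chi_mul (n : ℕ) (a : K n) (ha : a ≠ 0) : ∑ x : K n, chi n (a * x) = 0 := by
  calc ∑ x : K n, chi n (a * x) = ∑ x : K n, chi n x :=
        Fintype.sum_equiv (Equiv.mulLeft₀ a ha) _ (chi n) (fun x => rfl)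
    _ = 0 := sum_chi n
section Key
variable {n : ℕ} (L1 L2 L1s L2s : K n →ₗ[ZMod 2] K n)

lemma key_kloosterman
    (hadj1 : ∀ x y, tr n (L1 x * y) = tr n (x * L1s y))
    (hadj2 : ∀ x y, tr n (L2 x * y) = tr n (x * L2s y))
    (hperm : Function.Bijective (fun x : K n => L1 x⁻¹ + L2 x))
    (b : K n) (hb : L1s b ≠ 0) : Kl n (L1s b * L2s b) = 0 := by
  have hb0 : b ≠ 0 := by rintro rfl; exact hb (map_zero L1s)
  have S1 : ∑ x : K n, chi n ((L1 x⁻¹ + L2 x) * b) = 0 := by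
    calc ∑ x : K n, chi n ((L1 x⁻¹ + L2 x) * b)
        = ∑ y : K n, chi n (y * b) :=
          Fintype.sum_equiv (Equiv.ofBijective _ hperm) _ _ (fun x => rfl)
      _ = ∑ y : K n, chi n (b * y) := by simp_rw [mul_comm]
      _ = 0 := sum_chi_mul n b hb0
  have S2 : ∀ x : K n, chi n ((L1 x⁻¹ + L2 x) * b) = chi n (L1s b * x⁻¹ + L2s b * x) := by
    intro x
    apply chi_tr
    rw [add_mul, tr_add, tr_add, hadj1, hadj2]
    ring_nf
  rw [Finset.sum_congr rfl (fun x _ => S2 x)] at S1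
  rw [← S1]
  unfold Kl
  refine Fintype.sum_equiv (Equiv.mulLeft₀ (L1s b) hb) _ _ (fun y => ?_)
  show chi n (y⁻¹ + L1s b * L2s b * y)
      = chi n (L1s b * (L1s b * y)⁻¹ + L2s b * (L1s b * y))
  apply chi_tr
  congr 1
  have h1 : L1s b * (L1s b * y)⁻¹ = y⁻¹ := by
    rcases eq_or_ne y 0 with rfl | hy
    · simp
    · field_simp
  rw [h1]
  ring

end Key
theorem stmt17 {n : ℕ} (L1 L2 L1s L2s : K n →ₗ[ZMod 2] K n)
    (h1 : L1 ≠ 0) (h2 : L2 ≠ 0)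
    (hnb1 : ¬ Function.Bijective L1) (hnb2 : ¬ Function.Bijective L2)
    (hadj1 : ∀ x y, tr n (L1 x * y) = tr n (x * L1s y))
    (hadj2 : ∀ x y, tr n (L2 x * y) = tr n (x * L2s y))
    (hker : LinearMap.ker L1s ⊓ LinearMap.ker L2s = ⊥)
    (hperm : Function.Bijective (fun x : K n => L1 x⁻¹ + L2 x))
    (c : K n) (hc : c ≠ 0) (hcker : c ∈ LinearMap.ker L2s) :
    ∃ V : Submodule (ZMod 2) (K n),
      (V : Set (K n)) = (fun y : K n => L1s c * L2s y) '' (LinearMap.ker L1s : Set (K n)) ∧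
      Module.finrank (ZMod 2) V = Module.finrank (ZMod 2) (LinearMap.ker L1s) ∧
      ∀ v ∈ V, Kl n v = 0 := by
  have hc1 : L1s c ≠ 0 := by
    intro h
    have : c ∈ LinearMap.ker L1s ⊓ LinearMap.ker L2s := ⟨h, hcker⟩
    rw [hker] at this
    exact hc this
  set M : K n →ₗ[ZMod 2] K n := (LinearMap.mulLeft (ZMod 2) (L1s c)).comp L2s with hM
  have hMfun : ∀ y, M y = L1s c * L2s y := fun y => rfl
  refine ⟨Submodule.map M (LinearMap.ker L1s), ?_, ?_, ?_⟩
  · rw [Submodule.map_coe]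
    rfl
  · have hinj : Function.Injective (M.comp (LinearMap.ker L1s).subtype) := by
      rw [← LinearMap.ker_eq_bot, LinearMap.ker_eq_bot']
      intro ⟨y, hy⟩ h
      have h' : L1s c * L2s y = 0 := h
      have hy2 : L2s y = 0 := by
        rcases mul_eq_zero.mp h' with h'' | h''
        · exact absurd h'' hc1
        · exact h''
      have : y ∈ LinearMap.ker L1s ⊓ LinearMap.ker L2s := ⟨hy, hy2⟩
      rw [hker] at this
      exact Subtype.ext this
    have hrange : LinearMap.range (M.comp (LinearMap.ker L1s).subtype)
        = Submodule.map M (LinearMap.ker L1s) := by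
      rw [LinearMap.range_comp, Submodule.range_subtype]
    rw [← hrange]
    exact LinearMap.finrank_range_of_inj hinj
  · rintro v ⟨y, hy, rfl⟩
    have hb1 : L1s (c + y) = L1s c := by
      rw [map_add, LinearMap.mem_ker.mp hy, add_zero]
    have hb2 : L2s (c + y) = L2s y := by
      rw [map_add, LinearMap.mem_ker.mp hcker, zero_add]
    have := key_kloosterman L1 L2 L1s L2s hadj1 hadj2 hperm (c + y)
      (by rw [hb1]; exact hc1)
    rw [hb1, hb2] at this
    exact this
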